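/- The number Z(r,β) = #{x ∈ GF(r) : Tr_{r/q}(βx^N) = 0} equals (1/q)[q + r - 1 + N(r-1)/lcm(N,(r-1)/(q-1)) · η_{i(β)}^{(N₂,r)}] for β ∈ GF(r)*. -/

import Mathlib

open scoped Classical

/-- The Gauss period `η_i^{(N,r)} = Σ_{x ∈ αⁱ·<α^N>} ζ_p^{Tr_{r/p}(x)}`. -/
noncomputable def gaussPeriod (p : ℕ) (F : Type) [Field F] [Fintype F]
    [Algebra (ZMod p) F] (α : Fˣ) (N i : ℕ) : ℂ :=
  ∑ x ∈ Finset.univ.filter (fun x : Fˣ => ∃ j : ℕ, x = α ^ i * (α ^ N) ^ j),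
    Complex.exp (2 * Real.pi * Complex.I *
      ((Algebra.trace (ZMod p) F (x : F)).val : ℂ) / (p : ℂ))

/-!
Orthogonality of the additive character `ψ = ζ_p ^ Tr_{F/𝔽_p}` over `K` gives
`q · Z = ∑_{a ∈ K} ∑_{x ∈ F} ψ(a β x^N)`. The terms with `a = 0` or `x = 0` contribute
`r + q - 1`. The remaining terms are `ψ(β y)` with `y` running over the image of the
homomorphism `(a, u) ↦ a u^N : K* × F* → F*`, each value taken `|ker|` times. In the cyclic
group `F*` the image of `K*` is the subgroup of `(r-1)/(q-1)`-th powers, so the image is the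
subgroup `⟨α^{N₂}⟩` of `N₂`-th powers, and `|ker| = (q-1) N₂ = N(r-1)/lcm(N, (r-1)/(q-1))`.
Translating `⟨α^{N₂}⟩` by `β` gives the cyclotomic class `α^{i(β)} ⟨α^{N₂}⟩`, over which the
sum of `ψ` is `η_{i(β)}`.
-/

open Finset

section CommGroup

variable {G : Type*} [CommGroup G]

theorem MonoidHom.range_coprod {M N : Type*} [Group M] [Group N] (f : M →* G) (g : N →* G) :
    (f.coprod g).range = f.range ⊔ g.range := by
  ext x
  simp only [Subgroup.mem_sup, MonoidHom.mem_range, Prod.exists, MonoidHom.coprod_apply]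
  constructor
  · rintro ⟨a, b, rfl⟩
    exact ⟨_, ⟨a, rfl⟩, _, ⟨b, rfl⟩, rfl⟩
  · rintro ⟨_, ⟨a, rfl⟩, _, ⟨b, rfl⟩, rfl⟩
    exact ⟨a, b, rfl⟩

theorem range_powMonoidHom_sup (a b : ℕ) :
    (powMonoidHom a : G →* G).range ⊔ (powMonoidHom b).range =
      (powMonoidHom (a.gcd b)).range := by
  apply le_antisymm
  · refine sup_le ?_ ?_ <;> rintro _ ⟨x, rfl⟩
    · exact ⟨x ^ (a / a.gcd b), by simp [← pow_mul, Nat.div_mul_cancel (a.gcd_dvd_left b)]⟩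
    · exact ⟨x ^ (b / a.gcd b), by simp [← pow_mul, Nat.div_mul_cancel (a.gcd_dvd_right b)]⟩
  · rintro _ ⟨x, rfl⟩
    have bezout : x ^ a.gcd b = (x ^ a.gcdA b) ^ a * (x ^ a.gcdB b) ^ b := by
      rw [← zpow_natCast, Nat.gcd_eq_gcd_ab, zpow_add, ← zpow_natCast, ← zpow_natCast,
        ← zpow_mul, ← zpow_mul, mul_comm (a : ℤ), mul_comm (b : ℤ)]
    exact Subgroup.mem_sup.2 ⟨_, ⟨_, rfl⟩, _, ⟨_, rfl⟩, bezout.symm⟩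

theorem range_powMonoidHom_eq_zpowers {α : G} (hα : ∀ x, x ∈ Subgroup.zpowers α) (k : ℕ) :
    (powMonoidHom k : G →* G).range = Subgroup.zpowers (α ^ k) := by
  rw [MonoidHom.range_eq_map, ← (Subgroup.eq_top_iff' _).2 hα, MonoidHom.map_zpowers]
  rfl

variable [Finite G] [IsCyclic G]

theorem IsCyclic.ker_powMonoidHom_eq_range {k : ℕ} (hk : k ∣ Nat.card G) :
    (powMonoidHom k : G →* G).ker = (powMonoidHom (Nat.card G / k)).range := by
  symm
  refine Subgroup.eq_of_le_of_card_ge ?_ ?_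
  · rintro _ ⟨x, rfl⟩
    simp [← pow_mul, Nat.div_mul_cancel hk, pow_card_eq_one']
  · have hG : Nat.card G / k ∣ Nat.card G := Nat.div_dvd_of_dvd hk
    rw [IsCyclic.card_powMonoidHom_ker, IsCyclic.card_powMonoidHom_range, Nat.gcd_eq_right hG,
      Nat.gcd_eq_right hk, Nat.div_div_self hk Nat.card_pos.ne']

theorem IsCyclic.eq_ker_powMonoidHom_card (S : Subgroup G) :
    S = (powMonoidHom (Nat.card S)).ker := by
  refine Subgroup.eq_of_le_of_card_ge (fun x hx => ?_) ?_
  · exact congrArg Subtype.val (pow_card_eq_one' (G := S) (x := ⟨x, hx⟩))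
  · rw [IsCyclic.card_powMonoidHom_ker, Nat.gcd_eq_right (Subgroup.card_subgroup_dvd_card S)]

end CommGroup

theorem MonoidHom.sum_comp_eq_card_ker_smul {G H M : Type*} [Group G] [Fintype G] [Group H]
    [Fintype H] [AddCommMonoid M] (φ : G →* H) [DecidablePred (· ∈ φ.range)] (f : H → M) :
    ∑ g, f (φ g) = Nat.card φ.ker • ∑ h ∈ univ.filter (· ∈ φ.range), f h := by
  have fiber : ∀ h ∈ univ.image φ, #{g | φ g = h} = Nat.card φ.ker := by
    intro h hh
    rw [MonoidHom.card_fiber_eq_of_mem_range φ (by simpa using hh) ⟨1, map_one φ⟩,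
      Nat.card_eq_fintype_card, ← Fintype.card_subtype]
    simp [MonoidHom.mem_ker]
  have image : univ.image φ = univ.filter (· ∈ φ.range) := by
    ext h
    simp
  rw [Finset.sum_comp, Finset.sum_congr rfl fun h hh => by rw [fiber h hh], ← Finset.smul_sum,
    image]

theorem sum_filter_mem_zpowers_mul {G M : Type*} [Group G] [Fintype G] [AddCommMonoid M]
    {a β γ : G} [DecidablePred (· ∈ Subgroup.zpowers γ)] (hβ : ∃ j : ℕ, β = a * γ ^ j)
    (f : G → M) :
    ∑ h ∈ univ.filter (· ∈ Subgroup.zpowers γ), f (β * h) =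
      ∑ x ∈ univ.filter (fun x => ∃ j : ℕ, x = a * γ ^ j), f x := by
  obtain ⟨j, rfl⟩ := hβ
  refine Finset.sum_equiv (Equiv.mulLeft (a * γ ^ j)) (fun h => ?_) (fun _ _ => rfl)
  simp only [mem_filter, mem_univ, true_and, Equiv.coe_mulLeft, mul_assoc, mul_right_inj]
  rw [← Subgroup.mul_mem_cancel_left _ (Subgroup.npow_mem_zpowers γ j),
    ← (isOfFinOrder_of_finite γ).mem_powers_iff_mem_zpowers]
  exact exists_congr fun k => eq_comm

theorem Fintype.sum_eq_add_sum_units {M₀ M : Type*} [GroupWithZero M₀] [Fintype M₀]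
    [AddCommMonoid M] (g : M₀ → M) : ∑ x, g x = g 0 + ∑ u : M₀ˣ, g u := by
  rw [Fintype.sum_eq_add_sum_compl 0, Finset.sum_subtype _ (p := (· ≠ 0)) (by simp),
    ← Fintype.sum_equiv unitsEquivNeZero _ _ fun _ => rfl]
  rfl

theorem Nat.mul_div_lcm_div {N n k : ℕ} (hN : N ≠ 0) (hn : n ≠ 0) (hk : k ∣ n) :
    N * n / N.lcm (n / k) = k * N.gcd (n / k) := by
  obtain ⟨d, rfl⟩ := hk
  have hd : d ≠ 0 := right_ne_zero_of_mul hn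
  rw [Nat.mul_div_cancel_left d (Nat.pos_of_ne_zero (left_ne_zero_of_mul hn)), mul_left_comm,
    ← Nat.gcd_mul_lcm N d, ← mul_assoc,
    Nat.mul_div_cancel _ (Nat.pos_of_ne_zero (Nat.lcm_ne_zero hN hd))]

section TraceChar

variable (p : ℕ) [Fact p.Prime] (F : Type*) [Field F] [Algebra (ZMod p) F]

noncomputable def traceChar : AddChar F ℂ :=
  ZMod.stdAddChar.compAddMonoidHom (Algebra.trace (ZMod p) F).toAddMonoidHom

theorem traceChar_apply (x : F) :
    traceChar p F x = Complex.exp (2 * Real.pi * Complex.I *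
      ((Algebra.trace (ZMod p) F x).val : ℂ) / (p : ℂ)) :=
  ZMod.toCircle_apply _

theorem traceChar_ne_one [Finite F] : traceChar p F ≠ 1 := by
  obtain ⟨x, hx⟩ := Algebra.trace_surjective (ZMod p) F 1
  refine AddChar.ne_one_iff.2 ⟨x, fun h => one_ne_zero (α := ZMod p) ?_⟩
  rw [← hx]
  exact ZMod.injective_stdAddChar (h.trans (AddChar.map_zero_eq_one _).symm)

variable {p F}

theorem traceChar_algebraMap_mul [Finite F] {K : Type*} [Field K] [Finite K]
    [Algebra (ZMod p) K] [Algebra K F] [IsScalarTower (ZMod p) K F] (a : K) (t : F) :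
    traceChar p F (algebraMap K F a * t) = traceChar p K (a * Algebra.trace K F t) := by
  simp only [traceChar, AddChar.compAddMonoidHom_apply, LinearMap.toAddMonoidHom_coe]
  rw [← Algebra.trace_trace (S := K), ← Algebra.smul_def, LinearMap.map_smul, smul_eq_mul]

theorem sum_traceChar_algebraMap_mul [Finite F] (K : Type*) [Field K] [Fintype K] [Algebra K F]
    (t : F) :
    ∑ a : K, traceChar p F (algebraMap K F a * t) =
      if Algebra.trace K F t = 0 then (Fintype.card K : ℂ) else 0 := by
  have : CharP F p := charP_of_injective_algebraMap' (ZMod p) p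
  have : CharP K p := (algebraMap K F).charP (algebraMap K F).injective p
  let := ZMod.algebra K p
  have : IsScalarTower (ZMod p) K F := .of_algebraMap_eq' (RingHom.ext_zmod _ _)
  simp_rw [traceChar_algebraMap_mul]
  rw [AddChar.sum_mulShift _ (.of_ne_one (traceChar_ne_one p K)), apply_ite Nat.cast,
    Nat.cast_zero]

end TraceChar

section FiniteField

variable (K F : Type*) [Field K] [Field F] [Algebra K F]

noncomputable def mulPowHom (N : ℕ) : Kˣ × Fˣ →* Fˣ :=
  (Units.map (algebraMap K F).toMonoidHom).coprod (powMonoidHom N)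

variable {K F}

theorem coe_mulPowHom_apply (N : ℕ) (a : Kˣ) (u : Fˣ) :
    (mulPowHom K F N (a, u) : F) = algebraMap K F a * u ^ N :=
  rfl

theorem card_units_dvd_card_units : Nat.card Kˣ ∣ Nat.card Fˣ :=
  Subgroup.card_dvd_of_injective _ (Units.map_injective (algebraMap K F).injective)

theorem range_mulPowHom [Finite F] (N : ℕ) :
    (mulPowHom K F N).range =
      (powMonoidHom (N.gcd (Nat.card Fˣ / Nat.card Kˣ))).range := by
  let ι : Kˣ →* Fˣ := Units.map (algebraMap K F).toMonoidHom
  have card_range : Nat.card ι.range = Nat.card Kˣ :=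
    (Nat.card_congr (ι.ofInjective (Units.map_injective (algebraMap K F).injective)).toEquiv).symm
  rw [mulPowHom, MonoidHom.range_coprod, IsCyclic.eq_ker_powMonoidHom_card ι.range, card_range,
    IsCyclic.ker_powMonoidHom_eq_range card_units_dvd_card_units, range_powMonoidHom_sup,
    Nat.gcd_comm]

theorem card_ker_mulPowHom [Finite K] [Finite F] (N : ℕ) :
    Nat.card (mulPowHom K F N).ker = Nat.card Kˣ * N.gcd (Nat.card Fˣ / Nat.card Kˣ) := by
  have hk : Nat.card Kˣ ∣ Nat.card Fˣ := card_units_dvd_card_units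
  set g := N.gcd (Nat.card Fˣ / Nat.card Kˣ)
  have hg : g ∣ Nat.card Fˣ := (Nat.gcd_dvd_right _ _).trans (Nat.div_dvd_of_dvd hk)
  have hg0 : 0 < g :=
    Nat.gcd_pos_of_pos_right _ (Nat.div_pos (Nat.le_of_dvd Nat.card_pos hk) Nat.card_pos)
  have card_range : Nat.card (mulPowHom K F N).range = Nat.card Fˣ / g := by
    rw [range_mulPowHom, IsCyclic.card_powMonoidHom_range, Nat.gcd_eq_right hg]
  have h := (mulPowHom K F N).ker.card_mul_index
  rw [Subgroup.index_ker, card_range, Nat.card_prod, ← Nat.mul_div_cancel' hg, ← mul_assoc,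
    Nat.mul_div_cancel_left _ hg0] at h
  exact Nat.eq_of_mul_eq_mul_right (Nat.div_pos (Nat.le_of_dvd Nat.card_pos hg) hg0) h

end FiniteField

theorem sum_sum_algebraMap_mul_pow {K F : Type*} [Field K] [Fintype K] [Field F] [Fintype F]
    [Algebra K F] (ψ : AddChar F ℂ) (c : F) {N : ℕ} (hN : N ≠ 0) :
    ∑ a : K, ∑ x : F, ψ (algebraMap K F a * (c * x ^ N)) =
      Fintype.card F + Fintype.card Kˣ + ∑ z, ψ (c * mulPowHom K F N z) := by
  have inner (a : Kˣ) : ∑ x : F, ψ (algebraMap K F a * (c * x ^ N)) =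
      1 + ∑ u : Fˣ, ψ (c * mulPowHom K F N (a, u)) := by
    rw [Fintype.sum_eq_add_sum_units, zero_pow hN, mul_zero, mul_zero, AddChar.map_zero_eq_one]
    simp only [coe_mulPowHom_apply, mul_left_comm]
  rw [Fintype.sum_eq_add_sum_units, Fintype.sum_congr _ _ inner, Fintype.sum_prod_type]
  simp [Finset.sum_add_distrib, add_assoc]

theorem card_mul_card_filter_trace_eq_zero {p : ℕ} [Fact p.Prime] {F : Type*} [Field F]
    [Fintype F] [Algebra (ZMod p) F] (K : Type*) [Field K] [Fintype K] [Algebra K F]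
    {X : Type*} [Fintype X] (f : X → F) :
    (Fintype.card K : ℂ) * #{x | Algebra.trace K F (f x) = 0} =
      ∑ a : K, ∑ x, traceChar p F (algebraMap K F a * f x) := by
  rw [Finset.sum_comm]
  simp_rw [sum_traceChar_algebraMap_mul K]
  rw [Finset.sum_ite, Finset.sum_const_zero, add_zero, Finset.sum_const, nsmul_eq_mul, mul_comm]

theorem gaussPeriod_eq_sum_traceChar (p : ℕ) [Fact p.Prime] (F : Type) [Field F] [Fintype F]
    [Algebra (ZMod p) F] (α : Fˣ) (N i : ℕ) :
    gaussPeriod p F α N i =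
      ∑ x ∈ univ.filter (fun x : Fˣ => ∃ j : ℕ, x = α ^ i * (α ^ N) ^ j), traceChar p F x := by
  simp only [gaussPeriod, traceChar_apply]

theorem stmt7_general (p N q r N₂ : ℕ) (hp : p.Prime) (hN : N ∣ r - 1)
    (hN₂ : N₂ = Nat.gcd N ((r - 1) / (q - 1)))
    (K F : Type) [Field K] [Fintype K] [Field F] [Fintype F]
    [Algebra K F] [Algebra (ZMod p) F]
    (hcardK : Fintype.card K = q) (hcardF : Fintype.card F = r)
    (α : Fˣ) (hα : ∀ x : Fˣ, x ∈ Subgroup.zpowers α)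
    (β : Fˣ) (iβ : ℕ) (hiβ : ∃ j : ℕ, β = α ^ iβ * (α ^ N₂) ^ j) :
    (((Finset.univ.filter fun x : F =>
          Algebra.trace K F ((β : F) * x ^ N) = 0).card : ℂ)) =
      (1 / (q : ℂ)) * ((q : ℂ) + (r : ℂ) - 1 +
        ((N * (r - 1) / Nat.lcm N ((r - 1) / (q - 1)) : ℕ) : ℂ) *
          gaussPeriod p F α N₂ iβ) := by
  have : Fact p.Prime := ⟨hp⟩
  have card_unitsK : Nat.card Kˣ = q - 1 := by
    rw [Nat.card_units, Nat.card_eq_fintype_card, hcardK]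
  have card_unitsF : Nat.card Fˣ = r - 1 := by
    rw [Nat.card_units, Nat.card_eq_fintype_card, hcardF]
  have hq : 1 < q := hcardK ▸ Fintype.one_lt_card
  have hr : r - 1 ≠ 0 := by have := hcardF ▸ Fintype.one_lt_card (α := F); omega
  have hN0 : N ≠ 0 := by rintro rfl; exact hr (Nat.eq_zero_of_zero_dvd hN)
  have orbit_sum : ∑ z, traceChar p F (β * mulPowHom K F N z) =
      (((q - 1) * N₂ : ℕ) : ℂ) * gaussPeriod p F α N₂ iβ := by
    have := (mulPowHom K F N).sum_comp_eq_card_ker_smul fun y => traceChar p F (β * y : Fˣ)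
    simp only [card_ker_mulPowHom, range_mulPowHom, card_unitsK, card_unitsF, ← hN₂,
      range_powMonoidHom_eq_zpowers hα] at this
    rw [sum_filter_mem_zpowers_mul hiβ fun y => traceChar p F y, nsmul_eq_mul] at this
    rw [gaussPeriod_eq_sum_traceChar, ← this]
    simp only [Units.val_mul]
  have key : (q : ℂ) * #{x | Algebra.trace K F ((β : F) * x ^ N) = 0} =
      r + (q - 1 : ℕ) + (((q - 1) * N₂ : ℕ) : ℂ) * gaussPeriod p F α N₂ iβ := by
    rw [← hcardK, card_mul_card_filter_trace_eq_zero (p := p), sum_sum_algebraMap_mul_pow _ _ hN0,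
      orbit_sum, hcardF, ← Nat.card_eq_fintype_card, card_unitsK, hcardK]
  have hqr : q - 1 ∣ r - 1 := card_unitsF ▸ card_unitsK ▸ card_units_dvd_card_units
  rw [Nat.mul_div_lcm_div hN0 hr hqr, ← hN₂]
  have hq0 : (q : ℂ) ≠ 0 := by exact_mod_cast (zero_lt_one.trans hq).ne'
  push_cast [hq.le] at key ⊢
  field_simp
  linear_combination key

/-- `Z(r,β) = #{x ∈ GF(r) : Tr_{r/q}(βx^N) = 0}` equals
`(1/q)[q + r - 1 + (N(r-1)/lcm(N,(r-1)/(q-1)))·η_{i(β)}^{(N₂,r)}]`. -/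
theorem stmt7 (p s m N q r N₂ : ℕ) (hp : p.Prime) (hs : 0 < s) (hm : 0 < m)
    (hq : q = p ^ s) (hr : r = q ^ m) (hN : N ∣ r - 1)
    (hN₂ : N₂ = Nat.gcd N ((r - 1) / (q - 1)))
    (K F : Type) [Field K] [Fintype K] [Field F] [Fintype F]
    [Algebra K F] [Algebra (ZMod p) F]
    (hcardK : Fintype.card K = q) (hcardF : Fintype.card F = r)
    (α : Fˣ) (hα : ∀ x : Fˣ, x ∈ Subgroup.zpowers α)
    (β : Fˣ) (iβ : ℕ) (hiβ : ∃ j : ℕ, β = α ^ iβ * (α ^ N₂) ^ j) :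
    (((Finset.univ.filter fun x : F =>
          Algebra.trace K F ((β : F) * x ^ N) = 0).card : ℂ)) =
      (1 / (q : ℂ)) * ((q : ℂ) + (r : ℂ) - 1 +
        ((N * (r - 1) / Nat.lcm N ((r - 1) / (q - 1)) : ℕ) : ℂ) *
          gaussPeriod p F α N₂ iβ) :=
  stmt7_general p N q r N₂ hp hN hN₂ K F hcardK hcardF α hα β iβ hiβ
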